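/- Let U be a linear isometric action of a finitely generated Abelian group Γ on a Banach space B, and let c : Γ → B be a cocycle, i.e. c(g_1 g_2) = c(g_2) + U(g_2)(c(g_1)) for all g_1, g_2 ∈ Γ. Then there exists a sequence of vectors ψ_n ∈ B such that, for every f ∈ Γ, the coboundary defect ||c(f) − (ψ_n − U(f)(ψ_n))||_B converges to drift_c(f) as n → ∞; in fact, drift_c(f) = inf_{ψ ∈ B} ||c(f) − (ψ − U(f)(ψ))||_B for every f ∈ Γ. -/

import Mathlib

/-!
Every coboundary defect bounds the drift from above: the cohomologous cocycle
`c' g = c g - (ψ - U g ψ)` differs from `c` by at most `2 ‖ψ‖`, and `‖c' (fⁿ)‖ ≤ n ‖c' f‖`.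
Conversely, averaging `U` over the boxes `{g₁ ^ k₁ ⋯ gᵣ ^ kᵣ : kᵢ ≤ n}` built on generators gives
operators `Aₙ` of norm at most `1` with `‖(U f - 1) Aₙ‖ → 0` for every `f`. Because `Γ` is
Abelian, each `Aₙ` maps `c f` to `c f - (ψₙ - U f ψₙ)` with `ψₙ` independent of `f`. Finally
`m • c f = c (fᵐ) + (Φ - U f Φ)` with `Φ = ∑_{j<m} c (fʲ)`, so
`limsup ‖Aₙ (c f)‖ ≤ ‖c (fᵐ)‖ / m` for every `m`, which tends to the drift.
-/

open Filter Topology Finset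

noncomputable section

section Mean

variable {R : Type*} [SeminormedRing R] [NormedAlgebra ℝ R]

def powMean (x : R) (n : ℕ) : R := ((n : ℝ) + 1)⁻¹ • ∑ k ∈ range (n + 1), x ^ k

theorem Commute.powMean_right {x y : R} (h : Commute y x) (n : ℕ) : Commute y (powMean x n) :=
  (Commute.sum_right _ _ _ fun k _ => h.pow_right k).smul_right _

variable {x : R} (hx : ∀ k, ‖x ^ k‖ ≤ 1)
include hx

theorem norm_powMean_le (n : ℕ) : ‖powMean x n‖ ≤ 1 := by
  have hsum : ‖∑ k ∈ range (n + 1), x ^ k‖ ≤ n + 1 := by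
    simpa using norm_sum_le_of_le (range (n + 1)) fun k _ => hx k
  rw [powMean, norm_smul, Real.norm_of_nonneg (by positivity)]
  exact inv_mul_le_one_of_le₀ hsum (by positivity)

theorem norm_sub_one_mul_powMean_le (n : ℕ) : ‖(x - 1) * powMean x n‖ ≤ 2 / (n + 1) := by
  have hnorm : ‖x ^ (n + 1) - 1‖ ≤ 2 := by
    calc ‖x ^ (n + 1) - 1‖ ≤ ‖x ^ (n + 1)‖ + ‖x ^ 0‖ := by rw [pow_zero]; exact norm_sub_le _ _
      _ ≤ 2 := by linarith [hx (n + 1), hx 0]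
  rw [powMean, mul_smul_comm, mul_geom_sum, norm_smul, Real.norm_of_nonneg (by positivity),
    inv_mul_eq_div]
  gcongr

end Mean

section BoxMean

variable {Γ R : Type*} [CommMonoid Γ] [SeminormedRing R] [NormedAlgebra ℝ R]

def boxMean (ρ : Γ →* R) (gs : List Γ) (n : ℕ) : R := (gs.map fun g => powMean (ρ g) n).prod

variable {ρ : Γ →* R}

theorem commute_boxMean (f : Γ) (gs : List Γ) (n : ℕ) : Commute (ρ f) (boxMean ρ gs n) := by
  refine Commute.list_prod_right _ _ fun _ hy => ?_
  obtain ⟨g, -, rfl⟩ := List.mem_map.mp hy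
  exact ((Commute.all f g).map ρ).powMean_right n

variable (hρ : ∀ g, ‖ρ g‖ ≤ 1)
include hρ

omit [NormedAlgebra ℝ R] in
theorem norm_map_pow_le_one (g : Γ) (k : ℕ) : ‖ρ g ^ k‖ ≤ 1 := by
  rw [← map_pow]
  exact hρ _

theorem norm_boxMean_le (gs : List Γ) (n : ℕ) : ‖boxMean ρ gs n‖ ≤ 1 := by
  induction gs with
  | nil => simpa [boxMean] using hρ 1
  | cons g gs ih =>
    rw [boxMean, List.map_cons, List.prod_cons, ← boxMean]
    exact (norm_mul_le _ _).trans
      (mul_le_one₀ (norm_powMean_le (norm_map_pow_le_one hρ g) n) (norm_nonneg _) ih)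

theorem norm_sub_one_mul_boxMean_le {g : Γ} {gs : List Γ} (hg : g ∈ gs) (n : ℕ) :
    ‖(ρ g - 1) * boxMean ρ gs n‖ ≤ 2 / (n + 1) := by
  induction gs with
  | nil => simp at hg
  | cons h gs ih =>
    rw [boxMean, List.map_cons, List.prod_cons, ← boxMean]
    rcases List.mem_cons.mp hg with rfl | hg
    · rw [← mul_assoc]
      refine (norm_mul_le _ _).trans ?_
      simpa using mul_le_mul (norm_sub_one_mul_powMean_le (norm_map_pow_le_one hρ g) n)
        (norm_boxMean_le hρ gs n) (norm_nonneg _) (by positivity)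
    · have hcomm : Commute (ρ g - 1) (powMean (ρ h) n) :=
        (((Commute.all g h).map ρ).sub_left (Commute.one_left _)).powMean_right n
      rw [← mul_assoc, hcomm.eq, mul_assoc]
      refine (norm_mul_le _ _).trans ?_
      simpa using mul_le_mul (norm_powMean_le (norm_map_pow_le_one hρ h) n) (ih hg)
        (norm_nonneg _) zero_le_one

theorem tendsto_sub_one_mul_boxMean {gs : List Γ} (hgs : Submonoid.closure {g | g ∈ gs} = ⊤)
    (f : Γ) : Tendsto (fun n => (ρ f - 1) * boxMean ρ gs n) atTop (𝓝 0) := by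
  have hf : f ∈ Submonoid.closure {g | g ∈ gs} := hgs ▸ Submonoid.mem_top f
  induction hf using Submonoid.closure_induction with
  | mem g hg =>
    refine squeeze_zero_norm (norm_sub_one_mul_boxMean_le hρ hg) ?_
    simpa only [mul_one_div, mul_zero] using
      (tendsto_one_div_add_atTop_nhds_zero_nat (𝕜 := ℝ)).const_mul 2
  | one => simpa using tendsto_const_nhds
  | mul x y _ _ hx hy =>
    have hsplit : ∀ n, (ρ (x * y) - 1) * boxMean ρ gs n
        = ρ x * ((ρ y - 1) * boxMean ρ gs n) + (ρ x - 1) * boxMean ρ gs n := by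
      intro n; rw [map_mul]; noncomm_ring
    simp only [hsplit]
    simpa using (hy.const_mul (ρ x)).add hx

end BoxMean

def IsCocycle {Γ B : Type*} [Monoid Γ] [SeminormedAddCommGroup B] [NormedSpace ℝ B]
    (U : Γ →* (B ≃ₗᵢ[ℝ] B)) (c : Γ → B) : Prop :=
  ∀ g₁ g₂ : Γ, c (g₁ * g₂) = c g₂ + U g₂ (c g₁)

def drift {Γ B : Type*} [Monoid Γ] [SeminormedAddCommGroup B] (c : Γ → B) (f : Γ) : ℝ :=
  limUnder atTop fun n : ℕ => ‖c (f ^ n)‖ / n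

namespace IsCocycle

variable {Γ B : Type*} [SeminormedAddCommGroup B] [NormedSpace ℝ B]

section Monoid

variable [Monoid Γ] {U : Γ →* (B ≃ₗᵢ[ℝ] B)} {c : Γ → B} (hc : IsCocycle U c)
include hc

theorem map_one : c 1 = 0 := by
  simpa using hc 1 1

theorem map_pow_succ (f : Γ) (n : ℕ) : c (f ^ (n + 1)) = c f + U f (c (f ^ n)) := by
  rw [pow_succ, hc]

theorem norm_map_pow_add_le (f : Γ) (m n : ℕ) :
    ‖c (f ^ (m + n))‖ ≤ ‖c (f ^ m)‖ + ‖c (f ^ n)‖ := by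
  rw [pow_add, hc, add_comm ‖c (f ^ m)‖, ← (U (f ^ n)).norm_map (c (f ^ m))]
  exact norm_add_le _ _

theorem norm_map_pow_le (f : Γ) (n : ℕ) : ‖c (f ^ n)‖ ≤ n * ‖c f‖ := by
  induction n with
  | zero => simp [hc.map_one]
  | succ n ih =>
    calc ‖c (f ^ (n + 1))‖ ≤ ‖c (f ^ n)‖ + ‖c (f ^ 1)‖ := hc.norm_map_pow_add_le f n 1
      _ ≤ (n + 1 : ℕ) * ‖c f‖ := by push_cast; rw [pow_one]; linarith

theorem nsmul_sub_map_pow (f : Γ) (n : ℕ) :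
    n • c f - c (f ^ n) = (∑ j ∈ range n, c (f ^ j)) - U f (∑ j ∈ range n, c (f ^ j)) := by
  induction n with
  | zero => simp [hc.map_one]
  | succ n ih =>
    rw [succ_nsmul, hc.map_pow_succ, sum_range_succ, map_add]
    rw [← sub_eq_zero] at ih ⊢
    rw [← ih]
    abel

theorem tendsto_drift (f : Γ) :
    Tendsto (fun n : ℕ => ‖c (f ^ n)‖ / n) atTop (𝓝 (drift c f)) := by
  have hsub : Subadditive fun n => ‖c (f ^ n)‖ := hc.norm_map_pow_add_le f
  have hbdd : BddBelow (Set.range fun n : ℕ => ‖c (f ^ n)‖ / n) :=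
    ⟨0, by rintro _ ⟨n, rfl⟩; positivity⟩
  rw [drift, (hsub.tendsto_lim hbdd).limUnder_eq]
  exact hsub.tendsto_lim hbdd

theorem drift_le_norm (f : Γ) : drift c f ≤ ‖c f‖ := by
  refine le_of_tendsto (hc.tendsto_drift f) (Eventually.of_forall fun n => ?_)
  rcases n.eq_zero_or_pos with rfl | hn
  · simp
  · rw [div_le_iff₀ (by exact_mod_cast hn), mul_comm]
    exact hc.norm_map_pow_le f n

end Monoid

section CommGroup

variable [CommGroup Γ] {U : Γ →* (B ≃ₗᵢ[ℝ] B)} {c : Γ → B} (hc : IsCocycle U c)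
include hc

theorem add_apply_comm (f g : Γ) : c g + U g (c f) = c f + U f (c g) := by
  rw [← hc, mul_comm, hc]

theorem sub_coboundary (ψ : B) : IsCocycle U fun g => c g - (ψ - U g ψ) := by
  intro g₁ g₂
  have hU : U (g₁ * g₂) ψ = U g₂ (U g₁ ψ) := by rw [mul_comm, map_mul]; rfl
  simp only [hc g₁ g₂, hU, map_sub]
  abel

theorem drift_sub_coboundary (ψ : B) (f : Γ) :
    drift (fun g => c g - (ψ - U g ψ)) f = drift c f := by
  refine tendsto_nhds_unique ((hc.sub_coboundary ψ).tendsto_drift f) ?_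
  refine (hc.tendsto_drift f).congr_dist (squeeze_zero (fun _ => dist_nonneg) (fun n => ?_)
    (tendsto_const_div_atTop_nhds_zero_nat (2 * ‖ψ‖)))
  rw [Real.dist_eq, ← sub_div, abs_div, Nat.abs_cast]
  gcongr
  calc |‖c (f ^ n)‖ - ‖c (f ^ n) - (ψ - U (f ^ n) ψ)‖| ≤ ‖ψ - U (f ^ n) ψ‖ := by
        simpa using abs_norm_sub_norm_le (c (f ^ n)) (c (f ^ n) - (ψ - U (f ^ n) ψ))
    _ ≤ ‖ψ‖ + ‖U (f ^ n) ψ‖ := norm_sub_le _ _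
    _ = 2 * ‖ψ‖ := by rw [LinearIsometryEquiv.norm_map]; ring

theorem drift_le_norm_sub_coboundary (f : Γ) (ψ : B) :
    drift c f ≤ ‖c f - (ψ - U f ψ)‖ := by
  rw [← hc.drift_sub_coboundary ψ]
  exact (hc.sub_coboundary ψ).drift_le_norm f

end CommGroup

end IsCocycle

section Shift

variable {Γ B : Type*} [SeminormedAddCommGroup B] [NormedSpace ℝ B]

def clmRep [Monoid Γ] (U : Γ →* (B ≃ₗᵢ[ℝ] B)) : Γ →* (B →L[ℝ] B) where
  toFun g := (U g).toLinearIsometry.toContinuousLinearMap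
  map_one' := by ext; simp
  map_mul' _ _ := by ext; simp

@[simp]
theorem clmRep_apply [Monoid Γ] (U : Γ →* (B ≃ₗᵢ[ℝ] B)) (g : Γ) (x : B) :
    clmRep U g x = U g x := rfl

def ShiftsByCoboundary [Monoid Γ] (U : Γ →* (B ≃ₗᵢ[ℝ] B)) (c : Γ → B) (T : B →L[ℝ] B) : Prop :=
  ∃ ψ : B, ∀ f : Γ, T (c f) = c f - (ψ - U f ψ)

namespace ShiftsByCoboundary

variable [Monoid Γ] {U : Γ →* (B ≃ₗᵢ[ℝ] B)} {c : Γ → B}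

theorem one : ShiftsByCoboundary U c 1 := ⟨0, by simp⟩

theorem mul {T S : B →L[ℝ] B} (hT : ShiftsByCoboundary U c T) (hS : ShiftsByCoboundary U c S)
    (hTU : ∀ f, Commute (clmRep U f) T) : ShiftsByCoboundary U c (T * S) := by
  obtain ⟨ψ, hψ⟩ := hT
  obtain ⟨φ, hφ⟩ := hS
  refine ⟨ψ + T φ, fun f => ?_⟩
  have hcomm : T (U f φ) = U f (T φ) := congr($((hTU f).eq.symm) φ)
  rw [mul_apply_eq_comp, hφ, map_sub, map_sub, hψ, hcomm, map_add]
  abel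

theorem pow {T : B →L[ℝ] B} (hT : ShiftsByCoboundary U c T) (hTU : ∀ f, Commute (clmRep U f) T)
    (k : ℕ) : ShiftsByCoboundary U c (T ^ k) := by
  induction k with
  | zero => exact one
  | succ k ih => rw [pow_succ']; exact hT.mul ih hTU

theorem sum_smul {ι : Type*} (s : Finset ι) {w : ι → ℝ} (hw : ∑ k ∈ s, w k = 1)
    {T : ι → B →L[ℝ] B} (hT : ∀ k, ShiftsByCoboundary U c (T k)) :
    ShiftsByCoboundary U c (∑ k ∈ s, w k • T k) := by
  choose ψ hψ using hT
  refine ⟨∑ k ∈ s, w k • ψ k, fun f => ?_⟩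
  simp only [_root_.sum_apply, smul_apply, hψ, smul_sub,
    sum_sub_distrib, ← Finset.sum_smul, hw, one_smul, map_sum, map_smul]

theorem powMean {T : B →L[ℝ] B} (hT : ShiftsByCoboundary U c T)
    (hTU : ∀ f, Commute (clmRep U f) T) (n : ℕ) : ShiftsByCoboundary U c (powMean T n) := by
  rw [_root_.powMean, smul_sum]
  refine sum_smul _ ?_ (hT.pow hTU)
  rw [sum_const, card_range, nsmul_eq_mul]
  push_cast
  exact mul_inv_cancel₀ (by positivity)

end ShiftsByCoboundary

namespace IsCocycle

variable [CommGroup Γ] {U : Γ →* (B ≃ₗᵢ[ℝ] B)} {c : Γ → B} (hc : IsCocycle U c)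
include hc

theorem shiftsByCoboundary_map (g : Γ) : ShiftsByCoboundary U c (clmRep U g) :=
  ⟨c g, fun f => by
    rw [clmRep_apply, sub_sub_eq_add_sub]
    exact eq_sub_of_add_eq' (hc.add_apply_comm f g)⟩

theorem shiftsByCoboundary_boxMean (gs : List Γ) (n : ℕ) :
    ShiftsByCoboundary U c (boxMean (clmRep U) gs n) := by
  induction gs with
  | nil => exact ShiftsByCoboundary.one
  | cons g gs ih =>
    rw [boxMean, List.map_cons, List.prod_cons, ← boxMean]
    refine ShiftsByCoboundary.mul ?_ ih fun f => ?_
    · exact (hc.shiftsByCoboundary_map g).powMean (fun f => (Commute.all f g).map (clmRep U)) n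
    · exact ((Commute.all f g).map (clmRep U)).powMean_right n

theorem nat_mul_norm_apply_le {T : B →L[ℝ] B} (hT : ‖T‖ ≤ 1) {f : Γ}
    (hTf : Commute (clmRep U f) T) (m : ℕ) :
    m * ‖T (c f)‖ ≤ ‖c (f ^ m)‖ + ‖(clmRep U f - 1) * T‖ * ‖∑ j ∈ range m, c (f ^ j)‖ := by
  set Φ := ∑ j ∈ range m, c (f ^ j)
  have hsplit : m • T (c f) = T (c (f ^ m)) - ((clmRep U f - 1) * T) Φ := by
    have hcomm : T (U f Φ) = U f (T Φ) := congr($(hTf.eq.symm) Φ)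
    have hΦ : m • c f - c (f ^ m) = Φ - U f Φ := hc.nsmul_sub_map_pow f m
    rw [← map_nsmul, ← sub_add_cancel (m • c f) (c (f ^ m)), hΦ, map_add, map_sub, hcomm]
    simp only [mul_apply_eq_comp, sub_apply, clmRep_apply, one_apply_eq_self]
    abel
  calc (m : ℝ) * ‖T (c f)‖ = ‖m • T (c f)‖ := by
        rw [← Nat.cast_smul_eq_nsmul ℝ, norm_smul, Real.norm_natCast]
    _ ≤ ‖T (c (f ^ m))‖ + ‖((clmRep U f - 1) * T) Φ‖ := hsplit ▸ norm_sub_le _ _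
    _ ≤ ‖c (f ^ m)‖ + ‖(clmRep U f - 1) * T‖ * ‖Φ‖ := by
      gcongr
      · exact T.le_of_opNorm_le hT _ |>.trans_eq (one_mul _)
      · exact ContinuousLinearMap.le_opNorm _ _

theorem tendsto_norm_apply {A : ℕ → B →L[ℝ] B} (f : Γ) (hA : ∀ n, ‖A n‖ ≤ 1)
    (hAf : ∀ n, Commute (clmRep U f) (A n)) (hshift : ∀ n, ShiftsByCoboundary U c (A n))
    (hinv : Tendsto (fun n => (clmRep U f - 1) * A n) atTop (𝓝 0)) :
    Tendsto (fun n => ‖A n (c f)‖) atTop (𝓝 (drift c f)) := by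
  refine tendsto_order.2 ⟨fun a ha => Eventually.of_forall fun n => ?_, fun a ha => ?_⟩
  · obtain ⟨ψ, hψ⟩ := hshift n
    rw [hψ]
    exact ha.trans_le (hc.drift_le_norm_sub_coboundary f ψ)
  · obtain ⟨m, hm, hma⟩ : ∃ m : ℕ, 0 < m ∧ ‖c (f ^ m)‖ / m < a :=
      ((eventually_gt_atTop 0).and ((hc.tendsto_drift f).eventually (gt_mem_nhds ha))).exists
    set Φ := ∑ j ∈ range m, c (f ^ j)
    have hsmall : Tendsto (fun n => ‖c (f ^ m)‖ / m + ‖(clmRep U f - 1) * A n‖ * ‖Φ‖ / m)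
        atTop (𝓝 (‖c (f ^ m)‖ / m)) := by
      simpa using tendsto_const_nhds.add ((hinv.norm.mul_const ‖Φ‖).div_const (m : ℝ))
    filter_upwards [hsmall.eventually (gt_mem_nhds hma)] with n hn
    refine lt_of_le_of_lt ?_ hn
    rw [← add_div, le_div_iff₀' (by positivity)]
    exact hc.nat_mul_norm_apply_le (hA n) (hAf n) m

end IsCocycle

end Shift

theorem drift_of_cocycle_eq_inf_coboundary_defect_general
    {Γ : Type*} [CommGroup Γ] [Group.FG Γ]
    {B : Type*} [NormedAddCommGroup B] [NormedSpace ℝ B]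
    (U : Γ →* (B ≃ₗᵢ[ℝ] B)) (c : Γ → B)
    (hc : ∀ g₁ g₂ : Γ, c (g₁ * g₂) = c g₂ + U g₂ (c g₁)) :
    ∃ drift : Γ → ℝ,
      (∀ f : Γ, Tendsto (fun n : ℕ => ‖c (f ^ n)‖ / n) atTop (𝓝 (drift f))) ∧
      (∃ ψ : ℕ → B, ∀ f : Γ,
        Tendsto (fun n : ℕ => ‖c f - (ψ n - U f (ψ n))‖) atTop (𝓝 (drift f))) ∧
      (∀ f : Γ, drift f = ⨅ ψ : B, ‖c f - (ψ - U f ψ)‖) := by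
  replace hc : IsCocycle U c := hc
  obtain ⟨S, hS⟩ := (Group.fg_iff_monoid_fg.mp ‹_›).fg_top
  have hgen : Submonoid.closure {g | g ∈ S.toList} = ⊤ := by simpa using hS
  have hρ : ∀ g, ‖clmRep U g‖ ≤ 1 := fun g =>
    (U g).toLinearIsometry.norm_toContinuousLinearMap_le
  choose ψ hψ using hc.shiftsByCoboundary_boxMean S.toList
  have hdefect : ∀ f, Tendsto (fun n => ‖c f - (ψ n - U f (ψ n))‖) atTop (𝓝 (drift c f)) :=
    fun f => by
      simpa only [hψ] using hc.tendsto_norm_apply f (norm_boxMean_le hρ _) (commute_boxMean f _)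
        (hc.shiftsByCoboundary_boxMean _) (tendsto_sub_one_mul_boxMean hρ hgen f)
  refine ⟨drift c, hc.tendsto_drift, ⟨ψ, hdefect⟩, fun f => le_antisymm ?_ ?_⟩
  · exact le_ciInf (hc.drift_le_norm_sub_coboundary f)
  · exact ge_of_tendsto (hdefect f) (Eventually.of_forall fun n =>
      ciInf_le ⟨0, by rintro _ ⟨φ, rfl⟩; positivity⟩ (ψ n))

/-- **Drift of cocycles over isometric actions on Banach spaces.** Let `U` be a linear
isometric action of a finitely generated Abelian group `Γ` on a Banach space `B`, and let
`c : Γ → B` be a cocycle, i.e. `c (g₁ g₂) = c g₂ + U g₂ (c g₁)`. Then the drift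
`drift_c f = lim ‖c (fⁿ)‖ / n` exists for every `f ∈ Γ`, there is a sequence `(ψₙ)` in `B`
such that, for every `f ∈ Γ`, the coboundary defect `‖c f - (ψₙ - U f ψₙ)‖` converges to
`drift_c f`; in fact `drift_c f = ⨅ ψ, ‖c f - (ψ - U f ψ)‖`. -/
theorem drift_of_cocycle_eq_inf_coboundary_defect
    {Γ : Type*} [CommGroup Γ] [Group.FG Γ]
    {B : Type*} [NormedAddCommGroup B] [NormedSpace ℝ B] [CompleteSpace B]
    (U : Γ →* (B ≃ₗᵢ[ℝ] B)) (c : Γ → B)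
    (hc : ∀ g₁ g₂ : Γ, c (g₁ * g₂) = c g₂ + U g₂ (c g₁)) :
    ∃ drift : Γ → ℝ,
      (∀ f : Γ, Tendsto (fun n : ℕ => ‖c (f ^ n)‖ / n) atTop (𝓝 (drift f))) ∧
      (∃ ψ : ℕ → B, ∀ f : Γ,
        Tendsto (fun n : ℕ => ‖c f - (ψ n - U f (ψ n))‖) atTop (𝓝 (drift f))) ∧
      (∀ f : Γ, drift f = ⨅ ψ : B, ‖c f - (ψ - U f ψ)‖) :=
  drift_of_cocycle_eq_inf_coboundary_defect_general U c hc
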